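/- arXiv:quant-ph/0404126 — 5 statements merged into one kernel-verified Lean document; each statement's English description precedes it below -/
import Mathlib

section
/- For 0 < p < 1 and a fixed n×n complex matrix K, the function F(A,B) = Tr(A^p K† B^(1-p) K) is jointly concave on pairs of positive semidefinite n×n matrices, i.e., for A₁,A₂,B₁,B₂ positive semidefinite and λ ∈ [0,1], Tr((λA₁+(1-λ)A₂)^p K† (λB₁+(1-λ)B₂)^(1-p) K) ≥ λ Tr(A₁^p K† B₁^(1-p) K) + (1-λ) Tr(A₂^p K† B₂^(1-p) K). -/
open Matrix
open scoped ComplexOrder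

/-- Spectral power of a matrix: `A ^ p` defined via the spectral decomposition
(with the convention `0 ^ p = 0` for `p > 0`), extended by junk value `0`
off the Hermitian matrices. -/
noncomputable def mpow {n : ℕ} (A : Matrix (Fin n) (Fin n) ℂ) (p : ℝ) :
    Matrix (Fin n) (Fin n) ℂ :=
  if h : A.IsHermitian then h.cfc (fun x => x ^ p) else 0

/-!
For `a, b ≥ 0` and `0 < p < 1`, with the parallel sum `a ∥ b = a b / (a + b)`,
`a ^ p b ^ (1 - p) C_p = ∫₀^∞ t ^ (p - 2) (a ∥ t b) dt` for a constant `C_p > 0`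
(substitute `t ↦ (a / b) t`). In eigenbases of `A` and `B` this turns
`C_p Tr (A ^ p M B ^ (1 - p) Mᴴ)` into the integral over `t` of `t ^ (p - 2)` times the slice
`Σᵢⱼ (λᵢ ∥ t μⱼ) |Nᵢⱼ|²`, where `N` is `M` in those bases. Since
`(a ∥ b) |x + y|² ≤ a |x|² + b |y|²`, with equality at `x = b / (a + b) z`, the slice is the
minimum of `Tr (A X Xᴴ) + t Tr (Y B Yᴴ)` over `X + Y = M`: a minimum of functions linear in
`(A, B)`, hence jointly concave, and integrating in `t` keeps it so.
-/

open Set MeasureTheory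

noncomputable def parallelSum (a b : ℝ) : ℝ := a * b / (a + b)

section ParallelSum

variable {a b : ℝ}

lemma parallelSum_comm (a b : ℝ) : parallelSum a b = parallelSum b a := by
  rw [parallelSum, parallelSum, mul_comm, add_comm]

lemma parallelSum_nonneg (ha : 0 ≤ a) (hb : 0 ≤ b) : 0 ≤ parallelSum a b := by
  unfold parallelSum; positivity

@[simp] lemma parallelSum_zero_left (b : ℝ) : parallelSum 0 b = 0 := by simp [parallelSum]

@[simp] lemma parallelSum_zero_right (a : ℝ) : parallelSum a 0 = 0 := by simp [parallelSum]

lemma parallelSum_le_left (ha : 0 ≤ a) (hb : 0 ≤ b) : parallelSum a b ≤ a := by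
  rcases (add_nonneg ha hb).eq_or_lt with hab | hab
  · simpa [parallelSum, ← hab] using ha
  · rw [parallelSum, div_le_iff₀ hab]; nlinarith

lemma parallelSum_le_right (ha : 0 ≤ a) (hb : 0 ≤ b) : parallelSum a b ≤ b :=
  parallelSum_comm a b ▸ parallelSum_le_left hb ha

lemma parallelSum_mul_mul (c a b : ℝ) : parallelSum (c * a) (c * b) = c * parallelSum a b := by
  rcases eq_or_ne c 0 with rfl | hc
  · simp
  · rw [parallelSum, parallelSum, ← mul_add, mul_mul_mul_comm, mul_assoc, mul_div_mul_left _ _ hc,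
      mul_div_assoc]

lemma parallelSum_mul_normSq_add_le (ha : 0 ≤ a) (hb : 0 ≤ b) (x y : ℂ) :
    parallelSum a b * Complex.normSq (x + y) ≤ a * Complex.normSq x + b * Complex.normSq y := by
  rcases (add_nonneg ha hb).eq_or_lt with hab | hab
  · obtain ⟨rfl, rfl⟩ : a = 0 ∧ b = 0 := ⟨by linarith, by linarith⟩
    simp
  have hexpand : (a + b) * (a * Complex.normSq x + b * Complex.normSq y)
      - a * b * Complex.normSq (x + y) = Complex.normSq (a * x - b * y) := by
    simp only [Complex.normSq_apply, Complex.add_re, Complex.add_im, Complex.sub_re,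
      Complex.sub_im, Complex.re_ofReal_mul, Complex.im_ofReal_mul]
    ring
  rw [parallelSum, div_mul_eq_mul_div, div_le_iff₀ hab]
  linarith [Complex.normSq_nonneg (a * x - b * y)]

lemma mul_normSq_add_mul_normSq_sub_eq_parallelSum (ha : 0 ≤ a) (hb : 0 ≤ b) (z : ℂ) :
    a * Complex.normSq (↑(b / (a + b)) * z) + b * Complex.normSq (z - ↑(b / (a + b)) * z)
      = parallelSum a b * Complex.normSq z := by
  rcases (add_nonneg ha hb).eq_or_lt with hab | hab
  · obtain ⟨rfl, rfl⟩ : a = 0 ∧ b = 0 := ⟨by linarith, by linarith⟩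
    simp
  rw [show z - ↑(b / (a + b)) * z = ↑(1 - b / (a + b)) * z by push_cast; ring, Complex.normSq_mul,
    Complex.normSq_mul, Complex.normSq_ofReal, Complex.normSq_ofReal, parallelSum]
  field_simp
  ring

end ParallelSum

lemma integrableOn_Ioi_zero_of_norm_le_rpow {E : Type*} [NormedAddCommGroup E] {f : ℝ → E}
    {r s : ℝ} (hr : -1 < r) (hs : s < -1) (hf : ContinuousOn f (Ioi 0))
    (h₀ : ∀ t ∈ Ioc (0 : ℝ) 1, ‖f t‖ ≤ t ^ r) (h₁ : ∀ t ∈ Ioi (1 : ℝ), ‖f t‖ ≤ t ^ s) :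
    IntegrableOn f (Ioi 0) := by
  rw [← Ioc_union_Ioi_eq_Ioi zero_le_one, integrableOn_union]
  constructor
  · have hint : IntegrableOn (fun t : ℝ => t ^ r) (Ioc 0 1) := by
      simpa [intervalIntegrable_iff_integrableOn_Ioc_of_le zero_le_one] using
        intervalIntegral.intervalIntegrable_rpow' (a := 0) (b := 1) hr
    exact hint.mono' ((hf.mono Ioc_subset_Ioi_self).aestronglyMeasurable measurableSet_Ioc)
      ((ae_restrict_iff' measurableSet_Ioc).2 (.of_forall h₀))
  · exact (integrableOn_Ioi_rpow_of_lt hs zero_lt_one).mono'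
      ((hf.mono (Ioi_subset_Ioi zero_le_one)).aestronglyMeasurable measurableSet_Ioi)
      ((ae_restrict_iff' measurableSet_Ioi).2 (.of_forall h₁))

-- `= ∫₀^∞ s ^ (p - 1) / (1 + s) ds = π / sin (π p)`
noncomputable def liebConstant (p : ℝ) : ℝ := ∫ t in Ioi (0 : ℝ), t ^ (p - 2) * parallelSum 1 t

section LiebConstant

variable {p a b : ℝ}

lemma integrableOn_rpow_mul_parallelSum_one (hp0 : 0 < p) (hp1 : p < 1) :
    IntegrableOn (fun t : ℝ => t ^ (p - 2) * parallelSum 1 t) (Ioi 0) := by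
  refine integrableOn_Ioi_zero_of_norm_le_rpow (r := p - 1) (s := p - 2) (by linarith)
    (by linarith) ?_ (fun t ht => ?_) (fun t ht => ?_)
  · refine ContinuousOn.mul (fun t ht => (Real.continuousAt_rpow_const _ _
      (.inl (ne_of_gt ht))).continuousWithinAt) ?_
    refine ContinuousOn.div (by fun_prop) (by fun_prop) fun t ht => ?_
    have : (0 : ℝ) < t := ht
    positivity
  · obtain ⟨ht0, -⟩ := ht
    rw [Real.norm_of_nonneg (by positivity [parallelSum_nonneg zero_le_one ht0.le]),
      show p - 1 = p - 2 + 1 by ring, Real.rpow_add_one ht0.ne']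
    gcongr
    exact parallelSum_le_right zero_le_one ht0.le
  · have ht0 : (0 : ℝ) < t := zero_lt_one.trans ht
    rw [Real.norm_of_nonneg (by positivity [parallelSum_nonneg zero_le_one ht0.le])]
    calc t ^ (p - 2) * parallelSum 1 t ≤ t ^ (p - 2) * 1 := by
          gcongr; exact parallelSum_le_left zero_le_one ht0.le
      _ = t ^ (p - 2) := mul_one _

lemma liebConstant_pos (hp0 : 0 < p) (hp1 : p < 1) : 0 < liebConstant p := by
  have hpos : ∀ t ∈ Ioi (0 : ℝ), 0 < t ^ (p - 2) * parallelSum 1 t := fun t (ht : 0 < t) => by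
    unfold parallelSum; positivity
  rw [liebConstant, setIntegral_pos_iff_support_of_nonneg_ae
    ((ae_restrict_iff' measurableSet_Ioi).2 (.of_forall fun t ht => (hpos t ht).le))
    (integrableOn_rpow_mul_parallelSum_one hp0 hp1)]
  calc (0 : ENNReal) < volume (Ioi (0 : ℝ)) := by simp
    _ ≤ _ := measure_mono fun t ht => by exact ⟨(hpos t ht).ne', ht⟩

lemma rpow_mul_parallelSum_eq (ha : 0 < a) (hb : 0 < b) {t : ℝ} (ht : 0 < t) :
    t ^ (p - 2) * parallelSum a (t * b)
      = a * (a / b) ^ (p - 2) * ((b / a * t) ^ (p - 2) * parallelSum 1 (b / a * t)) := by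
  have ht' : t = a / b * (b / a * t) := by field_simp
  have hscale : parallelSum a (t * b) = a * parallelSum 1 (b / a * t) := by
    rw [← parallelSum_mul_mul, mul_one]; congr 1; field_simp
  rw [hscale]
  nth_rw 1 [ht']
  rw [Real.mul_rpow (by positivity) (by positivity)]
  ring

lemma integrableOn_rpow_mul_parallelSum (hp0 : 0 < p) (hp1 : p < 1) (ha : 0 ≤ a) (hb : 0 ≤ b) :
    IntegrableOn (fun t : ℝ => t ^ (p - 2) * parallelSum a (t * b)) (Ioi 0) := by
  rcases ha.eq_or_lt with rfl | ha
  · simp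
  rcases hb.eq_or_lt with rfl | hb
  · simp
  have hscaled := (integrableOn_Ioi_comp_mul_left_iff _ 0 (div_pos hb ha)).2
    (by simpa using integrableOn_rpow_mul_parallelSum_one hp0 hp1)
  exact IntegrableOn.congr_fun (hscaled.const_mul (a * (a / b) ^ (p - 2)))
    (fun t ht => (rpow_mul_parallelSum_eq ha hb ht).symm) measurableSet_Ioi

lemma integral_rpow_mul_parallelSum (hp0 : 0 < p) (hp1 : p < 1) (ha : 0 ≤ a) (hb : 0 ≤ b) :
    ∫ t in Ioi (0 : ℝ), t ^ (p - 2) * parallelSum a (t * b)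
      = a ^ p * b ^ (1 - p) * liebConstant p := by
  rcases ha.eq_or_lt with rfl | ha
  · simp [Real.zero_rpow hp0.ne']
  rcases hb.eq_or_lt with rfl | hb
  · simp [Real.zero_rpow (sub_ne_zero.2 hp1.ne')]
  rw [setIntegral_congr_fun measurableSet_Ioi (fun t ht => rpow_mul_parallelSum_eq ha hb ht),
    integral_const_mul, integral_comp_mul_left_Ioi (fun s => s ^ (p - 2) * parallelSum 1 s) 0
      (div_pos hb ha), mul_zero, ← liebConstant, smul_eq_mul, inv_div]
  have hexp : a * (a / b) ^ (p - 2) * (a / b) = a ^ p * b ^ (1 - p) := by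
    rw [mul_assoc, ← Real.rpow_add_one (by positivity), Real.div_rpow ha.le hb.le,
      show p - 2 + 1 = (p - 1) by ring, show 1 - p = -(p - 1) by ring, Real.rpow_neg hb.le,
      ← div_eq_mul_inv, mul_div_assoc', ← Real.rpow_one_add' ha.le (by linarith)]
    ring_nf
  rw [← mul_assoc, hexp]

end LiebConstant

section EigenRep

variable {ι : Type*} [Fintype ι] [DecidableEq ι] {A B : Matrix ι ι ℂ}

lemma trace_diagonal_mul_mul_diagonal_mul_conjTranspose (d e : ι → ℝ) (N : Matrix ι ι ℂ) :
    (Matrix.diagonal (RCLike.ofReal ∘ d) * N * Matrix.diagonal (RCLike.ofReal ∘ e) * Nᴴ).trace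
      = ((∑ i, ∑ j, d i * e j * Complex.normSq (N i j) : ℝ) : ℂ) := by
  simp only [trace, diag_apply, mul_apply (N := Nᴴ), mul_diagonal, diagonal_mul,
    conjTranspose_apply, Function.comp_apply, RCLike.ofReal_eq_complex_ofReal]
  push_cast
  refine Finset.sum_congr rfl fun i _ => Finset.sum_congr rfl fun j _ => ?_
  rw [Complex.normSq_eq_conj_mul_self, Complex.star_def]
  ring

noncomputable def eigenRep (hA : A.IsHermitian) (hB : B.IsHermitian) (M : Matrix ι ι ℂ) :
    Matrix ι ι ℂ :=
  star (hA.eigenvectorUnitary : Matrix ι ι ℂ) * M * hB.eigenvectorUnitary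

variable (hA : A.IsHermitian) (hB : B.IsHermitian)

lemma eigenRep_add (X Y : Matrix ι ι ℂ) :
    eigenRep hA hB (X + Y) = eigenRep hA hB X + eigenRep hA hB Y := by
  simp only [eigenRep, Matrix.mul_add, Matrix.add_mul]

lemma eigenRep_surjective : Function.Surjective (eigenRep hA hB) := fun C =>
  ⟨hA.eigenvectorUnitary * C * star (hB.eigenvectorUnitary : Matrix ι ι ℂ), by
    simp only [eigenRep, ← mul_assoc, Unitary.coe_star_mul_self, one_mul]
    simp only [mul_assoc, Unitary.coe_star_mul_self, mul_one]⟩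

lemma trace_cfc_mul_cfc_mul_conjTranspose (f g : ℝ → ℝ) (M : Matrix ι ι ℂ) :
    (hA.cfc f * M * hB.cfc g * Mᴴ).trace
      = ((∑ i, ∑ j, f (hA.eigenvalues i) * g (hB.eigenvalues j)
          * Complex.normSq (eigenRep hA hB M i j) : ℝ) : ℂ) := by
  rw [← trace_diagonal_mul_mul_diagonal_mul_conjTranspose]
  simp only [IsHermitian.cfc, Unitary.conjStarAlgAut_apply, eigenRep, conjTranspose_mul,
    star_eq_conjTranspose, conjTranspose_conjTranspose, mul_assoc]
  rw [Matrix.trace_mul_comm]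
  simp only [mul_assoc]
  rfl

end EigenRep

section SplitCost

variable {ι : Type*} [Fintype ι]

noncomputable def splitCost (t : ℝ) (A B X Y : Matrix ι ι ℂ) : ℝ :=
  (A * X * Xᴴ).trace.re + t * (Y * B * Yᴴ).trace.re

lemma splitCost_add_smul (t l m : ℝ) (A₁ A₂ B₁ B₂ X Y : Matrix ι ι ℂ) :
    splitCost t (l • A₁ + m • A₂) (l • B₁ + m • B₂) X Y
      = l * splitCost t A₁ B₁ X Y + m * splitCost t A₂ B₂ X Y := by
  simp only [splitCost, Matrix.add_mul, Matrix.mul_add, Matrix.smul_mul, Matrix.mul_smul,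
    trace_add, trace_smul, Complex.add_re, Complex.real_smul, Complex.re_ofReal_mul]
  ring

end SplitCost

section LiebSlice

variable {ι : Type*} [Fintype ι] [DecidableEq ι] {A B A₁ A₂ B₁ B₂ M : Matrix ι ι ℂ}
  {p t l m : ℝ}

lemma trace_mul_mul_conjTranspose_eq_sum (hA : A.IsHermitian) (hB : B.IsHermitian)
    (X : Matrix ι ι ℂ) :
    (A * X * Xᴴ).trace
      = ((∑ i, ∑ j, hA.eigenvalues i * Complex.normSq (eigenRep hA hB X i j) : ℝ) : ℂ) := by
  have h := trace_cfc_mul_cfc_mul_conjTranspose hA hB id (fun _ => 1) X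
  rw [← hA.cfc_eq, ← hB.cfc_eq, cfc_id ℝ A, cfc_const_one ℝ B, mul_one] at h
  simpa using h

lemma trace_conj_eq_sum (hA : A.IsHermitian) (hB : B.IsHermitian) (Y : Matrix ι ι ℂ) :
    (Y * B * Yᴴ).trace
      = ((∑ i, ∑ j, hB.eigenvalues j * Complex.normSq (eigenRep hA hB Y i j) : ℝ) : ℂ) := by
  have h := trace_cfc_mul_cfc_mul_conjTranspose hA hB (fun _ => 1) id Y
  rw [← hA.cfc_eq, ← hB.cfc_eq, cfc_id ℝ B, cfc_const_one ℝ A, one_mul] at h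
  simpa using h

lemma splitCost_eq_sum (hA : A.IsHermitian) (hB : B.IsHermitian) (t : ℝ) (X Y : Matrix ι ι ℂ) :
    splitCost t A B X Y = ∑ i, ∑ j, (hA.eigenvalues i * Complex.normSq (eigenRep hA hB X i j)
      + t * hB.eigenvalues j * Complex.normSq (eigenRep hA hB Y i j)) := by
  rw [splitCost, trace_mul_mul_conjTranspose_eq_sum hA hB, trace_conj_eq_sum hA hB,
    Complex.ofReal_re, Complex.ofReal_re]
  simp only [Finset.mul_sum, ← Finset.sum_add_distrib, mul_assoc]

noncomputable def liebSlice (t : ℝ) (hA : A.IsHermitian) (hB : B.IsHermitian)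
    (M : Matrix ι ι ℂ) : ℝ :=
  ∑ i, ∑ j, parallelSum (hA.eigenvalues i) (t * hB.eigenvalues j)
    * Complex.normSq (eigenRep hA hB M i j)

lemma liebSlice_le_splitCost (hA : A.PosSemidef) (hB : B.PosSemidef) (ht : 0 ≤ t)
    {X Y : Matrix ι ι ℂ} (hXY : X + Y = M) :
    liebSlice t hA.1 hB.1 M ≤ splitCost t A B X Y := by
  rw [splitCost_eq_sum hA.1 hB.1, liebSlice, ← hXY, eigenRep_add]
  gcongr with i _ j _
  exact parallelSum_mul_normSq_add_le (hA.eigenvalues_nonneg i)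
    (mul_nonneg ht (hB.eigenvalues_nonneg j)) _ _

lemma exists_splitCost_eq_liebSlice (hA : A.PosSemidef) (hB : B.PosSemidef) (ht : 0 ≤ t)
    (M : Matrix ι ι ℂ) :
    ∃ X Y, X + Y = M ∧ splitCost t A B X Y = liebSlice t hA.1 hB.1 M := by
  set N := eigenRep hA.1 hB.1 M
  let c (i j : ι) : ℂ := ↑(t * hB.1.eigenvalues j / (hA.1.eigenvalues i + t * hB.1.eigenvalues j))
  obtain ⟨X, hX⟩ := eigenRep_surjective hA.1 hB.1 (Matrix.of fun i j => c i j * N i j)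
  have hY : eigenRep hA.1 hB.1 (M - X) = N - Matrix.of fun i j => c i j * N i j := by
    rw [← hX, eq_sub_iff_add_eq, ← eigenRep_add, sub_add_cancel]
  refine ⟨X, M - X, add_sub_cancel X M, ?_⟩
  rw [splitCost_eq_sum hA.1 hB.1, liebSlice, hX, hY]
  refine Finset.sum_congr rfl fun i _ => Finset.sum_congr rfl fun j _ => ?_
  simpa only [mul_assoc, Matrix.of_apply, Matrix.sub_apply, c, N] using
    mul_normSq_add_mul_normSq_sub_eq_parallelSum (hA.eigenvalues_nonneg i) (mul_nonneg ht (hB.eigenvalues_nonneg j)) (N i j)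

lemma mul_liebSlice_add_mul_liebSlice_le (hA₁ : A₁.PosSemidef) (hA₂ : A₂.PosSemidef)
    (hB₁ : B₁.PosSemidef) (hB₂ : B₂.PosSemidef) (hl : 0 ≤ l) (hm : 0 ≤ m) (ht : 0 ≤ t)
    (hA : (l • A₁ + m • A₂).IsHermitian) (hB : (l • B₁ + m • B₂).IsHermitian) :
    l * liebSlice t hA₁.1 hB₁.1 M + m * liebSlice t hA₂.1 hB₂.1 M ≤ liebSlice t hA hB M := by
  obtain ⟨X, Y, hXY, hcost⟩ := exists_splitCost_eq_liebSlice
    ((hA₁.smul hl).add (hA₂.smul hm)) ((hB₁.smul hl).add (hB₂.smul hm)) ht M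
  rw [← hcost, splitCost_add_smul]
  gcongr
  exacts [liebSlice_le_splitCost hA₁ hB₁ ht hXY, liebSlice_le_splitCost hA₂ hB₂ ht hXY]

lemma integrableOn_rpow_mul_liebSlice (hp0 : 0 < p) (hp1 : p < 1) (hA : A.PosSemidef)
    (hB : B.PosSemidef) (M : Matrix ι ι ℂ) :
    IntegrableOn (fun t => t ^ (p - 2) * liebSlice t hA.1 hB.1 M) (Ioi 0) := by
  simp only [liebSlice, Finset.mul_sum, ← mul_assoc]
  exact integrable_finsetSum _ fun i _ => integrable_finsetSum _ fun j _ =>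
    (integrableOn_rpow_mul_parallelSum hp0 hp1 (hA.eigenvalues_nonneg i)
      (hB.eigenvalues_nonneg j)).mul_const _

lemma integral_rpow_mul_liebSlice (hp0 : 0 < p) (hp1 : p < 1) (hA : A.PosSemidef)
    (hB : B.PosSemidef) (M : Matrix ι ι ℂ) :
    ∫ t in Ioi 0, t ^ (p - 2) * liebSlice t hA.1 hB.1 M
      = liebConstant p * (hA.1.cfc (· ^ p) * M * hB.1.cfc (· ^ (1 - p)) * Mᴴ).trace.re := by
  have hint (i j : ι) := (integrableOn_rpow_mul_parallelSum hp0 hp1 (hA.eigenvalues_nonneg i)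
      (hB.eigenvalues_nonneg j)).mul_const (Complex.normSq (eigenRep hA.1 hB.1 M i j))
  simp only [liebSlice, trace_cfc_mul_cfc_mul_conjTranspose, Complex.ofReal_re, Finset.mul_sum,
    ← mul_assoc]
  rw [integral_finsetSum _ fun i _ => integrable_finsetSum _ fun j _ => hint i j]
  refine Finset.sum_congr rfl fun i _ => ?_
  rw [integral_finsetSum _ fun j _ => hint i j]
  refine Finset.sum_congr rfl fun j _ => ?_
  rw [integral_mul_const, integral_rpow_mul_parallelSum hp0 hp1 (hA.eigenvalues_nonneg i)
    (hB.eigenvalues_nonneg j)]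
  ring

end LiebSlice

lemma liebConstant_mul_trace_mpow {n : ℕ} {p : ℝ} (hp0 : 0 < p) (hp1 : p < 1)
    {K A B : Matrix (Fin n) (Fin n) ℂ} (hA : A.PosSemidef) (hB : B.PosSemidef) :
    liebConstant p * (mpow A p * Kᴴ * mpow B (1 - p) * K).trace.re
      = ∫ t in Ioi 0, t ^ (p - 2) * liebSlice t hA.1 hB.1 Kᴴ := by
  rw [integral_rpow_mul_liebSlice hp0 hp1 hA hB, mpow, mpow, dif_pos hA.1, dif_pos hB.1,
    conjTranspose_conjTranspose]

/-- **Lieb's concavity theorem.**  For `0 < p < 1` and fixed `K`, the map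
`(A, B) ↦ Tr (A^p Kᴴ B^(1-p) K)` is jointly concave on positive semidefinite matrices. -/
theorem lieb_concavity {n : ℕ} (p : ℝ) (hp0 : 0 < p) (hp1 : p < 1)
    (K A₁ A₂ B₁ B₂ : Matrix (Fin n) (Fin n) ℂ)
    (hA₁ : A₁.PosSemidef) (hA₂ : A₂.PosSemidef)
    (hB₁ : B₁.PosSemidef) (hB₂ : B₂.PosSemidef)
    (l : ℝ) (hl0 : 0 ≤ l) (hl1 : l ≤ 1) :
    l * ((mpow A₁ p * Kᴴ * mpow B₁ (1 - p) * K).trace).re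
      + (1 - l) * ((mpow A₂ p * Kᴴ * mpow B₂ (1 - p) * K).trace).re
      ≤ ((mpow (l • A₁ + (1 - l) • A₂) p * Kᴴ
          * mpow (l • B₁ + (1 - l) • B₂) (1 - p) * K).trace).re := by
  have hm : 0 ≤ 1 - l := sub_nonneg.2 hl1
  have hA := (hA₁.smul hl0).add (hA₂.smul hm)
  have hB := (hB₁.smul hl0).add (hB₂.smul hm)
  have hI₁ := (integrableOn_rpow_mul_liebSlice hp0 hp1 hA₁ hB₁ Kᴴ).const_mul l
  have hI₂ := (integrableOn_rpow_mul_liebSlice hp0 hp1 hA₂ hB₂ Kᴴ).const_mul (1 - l)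
  rw [← mul_le_mul_iff_right₀ (liebConstant_pos hp0 hp1), mul_add, mul_left_comm,
    mul_left_comm _ (1 - l), liebConstant_mul_trace_mpow hp0 hp1 hA₁ hB₁,
    liebConstant_mul_trace_mpow hp0 hp1 hA₂ hB₂, liebConstant_mul_trace_mpow hp0 hp1 hA hB,
    ← integral_const_mul, ← integral_const_mul, ← integral_add hI₁ hI₂]
  refine setIntegral_mono_on (hI₁.add hI₂) (integrableOn_rpow_mul_liebSlice hp0 hp1 hA hB Kᴴ)
    measurableSet_Ioi fun t (ht : 0 < t) => ?_
  rw [mul_left_comm, mul_left_comm (1 - l), ← mul_add]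
  exact mul_le_mul_of_nonneg_left
    (mul_liebSlice_add_mul_liebSlice_le hA₁ hA₂ hB₁ hB₂ hl0 hm ht.le hA.1 hB.1)
    (Real.rpow_nonneg ht.le _)
end

section
/- For positive definite n×n matrices A, the two linear maps on n×n matrices Ω_A(K) = ∫₀¹ A^p K A^(1-p) dp and Ω_A⁻¹(X) = ∫₀^∞ (A+uI)⁻¹ X (A+uI)⁻¹ du are inverses of each other: Ω_A⁻¹(Ω_A(K)) = K for all K. -/
open Matrix MeasureTheory
open scoped ComplexOrder

/-- Entrywise integral of a matrix-valued function over a set `s ⊆ ℝ`. -/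
noncomputable def mInt {n : ℕ} (s : Set ℝ) (f : ℝ → Matrix (Fin n) (Fin n) ℂ) :
    Matrix (Fin n) (Fin n) ℂ :=
  Matrix.of fun i j => ∫ u in s, f u i j

/-- The non-commutative multiplication operator `Ω_A(K) = ∫₀¹ A^p K A^(1-p) dp`. -/
noncomputable def Omega {n : ℕ} (A K : Matrix (Fin n) (Fin n) ℂ) :
    Matrix (Fin n) (Fin n) ℂ :=
  mInt (Set.Ioc (0 : ℝ) 1) (fun p => mpow A p * K * mpow A (1 - p))

/-- The operator `Ω_A⁻¹(X) = ∫₀^∞ (A + uI)⁻¹ X (A + uI)⁻¹ du`. -/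
noncomputable def OmegaInv {n : ℕ} (A X : Matrix (Fin n) (Fin n) ℂ) :
    Matrix (Fin n) (Fin n) ℂ :=
  mInt (Set.Ioi (0 : ℝ)) (fun u => (A + u • 1)⁻¹ * X * (A + u • 1)⁻¹)

/-!
Diagonalise `A = U diag(a) U*`. In the basis of matrix units of the eigenbasis, both maps are
Schur multipliers acting on `U* X U`: `Ω_A` multiplies the `(i, j)` entry by
`∫₀¹ aᵢ^p aⱼ^(1-p) dp = (aᵢ - aⱼ) / (log aᵢ - log aⱼ)` and `Ω_A⁻¹` by
`∫₀^∞ (aᵢ + u)⁻¹ (aⱼ + u)⁻¹ du = (log aᵢ - log aⱼ) / (aᵢ - aⱼ)` (respectively `aᵢ` and `aᵢ⁻¹`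
when `aᵢ = aⱼ`). The two multipliers are reciprocal, so the composite is the identity.
-/

open Filter Topology Real

section ScalarIntegrals

variable {a b : ℝ}

theorem continuous_rpow_mul_rpow_one_sub (ha : a ≠ 0) (hb : b ≠ 0) :
    Continuous fun p : ℝ => a ^ p * b ^ (1 - p) :=
  (continuous_const.rpow continuous_id fun _ => Or.inl ha).mul
    (continuous_const.rpow (continuous_const.sub continuous_id) fun _ => Or.inl hb)

theorem integral_rpow_mul_rpow_one_sub_self (ha : 0 ≤ a) :
    ∫ p in Set.Ioc (0 : ℝ) 1, a ^ p * a ^ (1 - p) = a := by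
  have h : ∀ p : ℝ, a ^ p * a ^ (1 - p) = a := fun p => by
    rw [← rpow_add' ha (by simp), add_sub_cancel, rpow_one]
  simp [h]

theorem log_sub_log_ne_zero (ha : 0 < a) (hb : 0 < b) (hab : a ≠ b) : log a - log b ≠ 0 :=
  sub_ne_zero.2 fun h => hab (log_injOn_pos ha hb h)

theorem integral_rpow_mul_rpow_one_sub_of_ne (ha : 0 < a) (hb : 0 < b) (hab : a ≠ b) :
    ∫ p in Set.Ioc (0 : ℝ) 1, a ^ p * b ^ (1 - p) = (a - b) / (log a - log b) := by
  have hlog := log_sub_log_ne_zero ha hb hab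
  have hexp : ∀ p : ℝ, a ^ p * b ^ (1 - p) = b * exp ((log a - log b) * p) := fun p => by
    rw [rpow_def_of_pos ha, rpow_def_of_pos hb, ← exp_log hb, ← exp_add, ← exp_add, log_exp]
    ring_nf
  rw [← intervalIntegral.integral_of_le zero_le_one]
  simp only [hexp]
  rw [intervalIntegral.integral_const_mul, intervalIntegral.integral_comp_mul_left exp hlog,
    mul_zero, mul_one, integral_exp, exp_zero, exp_sub, exp_log ha, exp_log hb, smul_eq_mul]
  field_simp

theorem hasDerivAt_log_add_sub_log_add_div (hab : a ≠ b) {x : ℝ} (hax : a + x ≠ 0)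
    (hbx : b + x ≠ 0) :
    HasDerivAt (fun u => (log (b + u) - log (a + u)) / (a - b)) ((a + x)⁻¹ * (b + x)⁻¹) x := by
  have hb' := ((hasDerivAt_id' x).const_add b).log hbx
  have ha' := ((hasDerivAt_id' x).const_add a).log hax
  refine ((hb'.sub ha').div_const (a - b)).congr_deriv ?_
  field_simp [sub_ne_zero.2 hab]
  ring

theorem hasDerivAt_neg_inv_add {x : ℝ} (hax : a + x ≠ 0) :
    HasDerivAt (fun u => -(a + u)⁻¹) ((a + x)⁻¹ * (a + x)⁻¹) x := by
  refine (((hasDerivAt_id' x).const_add a).inv hax).neg.congr_deriv ?_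
  field_simp

theorem tendsto_neg_inv_add_atTop (a : ℝ) : Tendsto (fun u => -(a + u)⁻¹) atTop (𝓝 0) := by
  simpa using (tendsto_inv_atTop_zero.comp (tendsto_atTop_add_const_left _ a tendsto_id)).neg

theorem tendsto_log_add_sub_log_add_div_atTop (a b : ℝ) :
    Tendsto (fun u => (log (b + u) - log (a + u)) / (a - b)) atTop (𝓝 0) := by
  simpa [add_comm] using
    ((tendsto_log_comp_add_sub_log b).sub (tendsto_log_comp_add_sub_log a)).div_const (a - b)

theorem integrableOn_Ioi_inv_add_mul_inv_add (ha : 0 < a) (hb : 0 < b) :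
    IntegrableOn (fun u => (a + u)⁻¹ * (b + u)⁻¹) (Set.Ioi 0) := by
  have hpos : ∀ x ∈ Set.Ioi (0 : ℝ), 0 ≤ (a + x)⁻¹ * (b + x)⁻¹ := fun x (hx : 0 < x) => by
    positivity
  rcases eq_or_ne a b with rfl | hab
  · exact integrableOn_Ioi_deriv_of_nonneg'
      (fun x (hx : 0 ≤ x) => hasDerivAt_neg_inv_add (by positivity)) hpos
      (tendsto_neg_inv_add_atTop a)
  · exact integrableOn_Ioi_deriv_of_nonneg'
      (fun x (hx : 0 ≤ x) => hasDerivAt_log_add_sub_log_add_div hab (by positivity) (by positivity))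
      hpos (tendsto_log_add_sub_log_add_div_atTop a b)

theorem integral_Ioi_inv_add_mul_inv_add_self (ha : 0 < a) :
    ∫ u in Set.Ioi (0 : ℝ), (a + u)⁻¹ * (a + u)⁻¹ = a⁻¹ := by
  rw [integral_Ioi_of_hasDerivAt_of_nonneg'
    (fun x (hx : 0 ≤ x) => hasDerivAt_neg_inv_add (by positivity))
    (fun x (hx : 0 < x) => by positivity) (tendsto_neg_inv_add_atTop a)]
  simp

theorem integral_Ioi_inv_add_mul_inv_add_of_ne (ha : 0 < a) (hb : 0 < b) (hab : a ≠ b) :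
    ∫ u in Set.Ioi (0 : ℝ), (a + u)⁻¹ * (b + u)⁻¹ = (log a - log b) / (a - b) := by
  rw [integral_Ioi_of_hasDerivAt_of_nonneg'
    (fun x (hx : 0 ≤ x) => hasDerivAt_log_add_sub_log_add_div hab (by positivity) (by positivity))
    (fun x (hx : 0 < x) => by positivity) (tendsto_log_add_sub_log_add_div_atTop a b)]
  simp only [add_zero]
  ring

theorem integral_Ioi_inv_add_mul_inv_add_mul_integral_rpow_mul_rpow_one_sub (ha : 0 < a)
    (hb : 0 < b) :
    (∫ u in Set.Ioi (0 : ℝ), (a + u)⁻¹ * (b + u)⁻¹) *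
      ∫ p in Set.Ioc (0 : ℝ) 1, a ^ p * b ^ (1 - p) = 1 := by
  rcases eq_or_ne a b with rfl | hab
  · rw [integral_Ioi_inv_add_mul_inv_add_self ha, integral_rpow_mul_rpow_one_sub_self ha.le,
      inv_mul_cancel₀ ha.ne']
  · rw [integral_Ioi_inv_add_mul_inv_add_of_ne ha hb hab,
      integral_rpow_mul_rpow_one_sub_of_ne ha hb hab]
    field_simp [sub_ne_zero.2 hab, log_sub_log_ne_zero ha hb hab]

end ScalarIntegrals

section MatrixIntegrals

variable {n : ℕ} {s : Set ℝ}

theorem mInt_congr (hs : MeasurableSet s) {f g : ℝ → Matrix (Fin n) (Fin n) ℂ}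
    (h : ∀ u ∈ s, f u = g u) : mInt s f = mInt s g := by
  ext i j
  exact setIntegral_congr_fun hs fun u hu => by rw [h u hu]

theorem mInt_mul_mul {f : ℝ → Matrix (Fin n) (Fin n) ℂ}
    (hf : ∀ i j, IntegrableOn (fun u => f u i j) s) (U V : Matrix (Fin n) (Fin n) ℂ) :
    mInt s (fun u => U * f u * V) = U * mInt s f * V := by
  ext i j
  have hint : ∀ k l, IntegrableOn (fun u => U i k * f u k l * V l j) s := fun k l =>
    ((hf k l).const_mul _).mul_const _
  simp only [mInt, of_apply, mul_apply, Finset.sum_mul]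
  rw [integral_finsetSum _ fun l _ => integrable_finsetSum _ fun k _ => hint k l]
  simp only [integral_finsetSum _ fun k _ => hint k _, integral_mul_const, integral_const_mul]

theorem diagonal_mul_mul_diagonal_ofReal_apply (c e : Fin n → ℝ) (M : Matrix (Fin n) (Fin n) ℂ)
    (i j : Fin n) :
    (diagonal (RCLike.ofReal ∘ c : Fin n → ℂ) * M * diagonal (RCLike.ofReal ∘ e : Fin n → ℂ))
      i j = ((c i * e j : ℝ) : ℂ) * M i j := by
  simp only [diagonal_mul, mul_diagonal, Function.comp_apply, RCLike.ofReal_eq_complex_ofReal,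
    Complex.ofReal_mul]
  ring

theorem mInt_diagonal_mul_mul_diagonal (c e : ℝ → Fin n → ℝ) (M : Matrix (Fin n) (Fin n) ℂ) :
    mInt s (fun u => diagonal (RCLike.ofReal ∘ c u : Fin n → ℂ) * M *
        diagonal (RCLike.ofReal ∘ e u : Fin n → ℂ)) =
      (of fun i j => ((∫ u in s, c u i * e u j : ℝ) : ℂ)) ⊙ M := by
  ext i j
  simp only [mInt, of_apply, hadamard_apply, diagonal_mul_mul_diagonal_ofReal_apply,
    integral_mul_const, integral_complex_ofReal]

theorem integrableOn_diagonal_mul_mul_diagonal_apply {c e : ℝ → Fin n → ℝ}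
    (hce : ∀ i j, IntegrableOn (fun u => c u i * e u j) s) (M : Matrix (Fin n) (Fin n) ℂ)
    (i j : Fin n) :
    IntegrableOn (fun u => (diagonal (RCLike.ofReal ∘ c u : Fin n → ℂ) * M *
      diagonal (RCLike.ofReal ∘ e u : Fin n → ℂ)) i j) s := by
  simp only [diagonal_mul_mul_diagonal_ofReal_apply]
  exact (hce i j).ofReal.mul_const _

end MatrixIntegrals

section Spectral

variable {n : ℕ} {A : Matrix (Fin n) (Fin n) ℂ}

theorem Matrix.IsHermitian.inv_add_smul_one_eq_cfc (hA : A.IsHermitian) {u : ℝ}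
    (hu : ∀ x ∈ spectrum ℝ A, x + u ≠ 0) :
    (A + u • 1)⁻¹ = hA.cfc fun x => (x + u)⁻¹ := by
  have hcont : ContinuousOn (fun x : ℝ => (x + u)⁻¹) (spectrum ℝ A) :=
    A.finite_real_spectrum.continuousOn _
  have hshift : cfc (fun x : ℝ => x + u) A = A + u • 1 := by
    rw [cfc_add_const u (fun x => x) A, cfc_id' ℝ A, Algebra.algebraMap_eq_smul_one]
  rw [← hA.cfc_eq]
  refine inv_eq_right_inv ?_
  rw [← hshift, ← cfc_mul _ _ A (by fun_prop) hcont,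
    cfc_congr (g := fun _ => 1) fun x hx => mul_inv_cancel₀ (hu x hx), cfc_const_one ℝ A]

theorem mInt_cfc_mul_mul_cfc {s : Set ℝ} (hA : A.IsHermitian) {f g : ℝ → ℝ → ℝ}
    (hfg : ∀ i j, IntegrableOn (fun u => f u (hA.eigenvalues i) * g u (hA.eigenvalues j)) s)
    (X : Matrix (Fin n) (Fin n) ℂ) :
    mInt s (fun u => hA.cfc (f u) * X * hA.cfc (g u)) =
      (hA.eigenvectorUnitary : Matrix (Fin n) (Fin n) ℂ) *
        ((of fun i j => ((∫ u in s, f u (hA.eigenvalues i) * g u (hA.eigenvalues j) : ℝ) : ℂ)) ⊙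
          (star (hA.eigenvectorUnitary : Matrix (Fin n) (Fin n) ℂ) * X *
            (hA.eigenvectorUnitary : Matrix (Fin n) (Fin n) ℂ))) *
        star (hA.eigenvectorUnitary : Matrix (Fin n) (Fin n) ℂ) := by
  set U := (hA.eigenvectorUnitary : Matrix (Fin n) (Fin n) ℂ)
  have hconj : ∀ u, hA.cfc (f u) * X * hA.cfc (g u) =
      U * (diagonal (RCLike.ofReal ∘ (f u ∘ hA.eigenvalues) : Fin n → ℂ) * (star U * X * U) *
        diagonal (RCLike.ofReal ∘ (g u ∘ hA.eigenvalues) : Fin n → ℂ)) * star U := fun u => by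
    simp only [IsHermitian.cfc, Unitary.conjStarAlgAut_apply, Matrix.mul_assoc]
    rfl
  simp only [hconj]
  rw [mInt_mul_mul (integrableOn_diagonal_mul_mul_diagonal_apply
      (c := fun u => f u ∘ hA.eigenvalues) (e := fun u => g u ∘ hA.eigenvalues) hfg _),
    mInt_diagonal_mul_mul_diagonal]
  rfl

end Spectral

section Omega

variable {n : ℕ} {A : Matrix (Fin n) (Fin n) ℂ}

theorem Omega_eq (hA : A.PosDef) (K : Matrix (Fin n) (Fin n) ℂ) :
    Omega A K =
      (hA.isHermitian.eigenvectorUnitary : Matrix (Fin n) (Fin n) ℂ) *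
        ((of fun i j => ((∫ p in Set.Ioc (0 : ℝ) 1,
            hA.isHermitian.eigenvalues i ^ p * hA.isHermitian.eigenvalues j ^ (1 - p) : ℝ) : ℂ)) ⊙
          (star (hA.isHermitian.eigenvectorUnitary : Matrix (Fin n) (Fin n) ℂ) * K *
            (hA.isHermitian.eigenvectorUnitary : Matrix (Fin n) (Fin n) ℂ))) *
        star (hA.isHermitian.eigenvectorUnitary : Matrix (Fin n) (Fin n) ℂ) := by
  simp only [Omega, mpow, dif_pos hA.isHermitian]
  exact mInt_cfc_mul_mul_cfc hA.isHermitian (fun i j => (continuous_rpow_mul_rpow_one_sub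
    (hA.eigenvalues_pos i).ne' (hA.eigenvalues_pos j).ne').integrableOn_Ioc) K

theorem OmegaInv_eq (hA : A.PosDef) (X : Matrix (Fin n) (Fin n) ℂ) :
    OmegaInv A X =
      (hA.isHermitian.eigenvectorUnitary : Matrix (Fin n) (Fin n) ℂ) *
        ((of fun i j => ((∫ u in Set.Ioi (0 : ℝ),
            (hA.isHermitian.eigenvalues i + u)⁻¹ * (hA.isHermitian.eigenvalues j + u)⁻¹ : ℝ) : ℂ)) ⊙
          (star (hA.isHermitian.eigenvectorUnitary : Matrix (Fin n) (Fin n) ℂ) * X *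
            (hA.isHermitian.eigenvectorUnitary : Matrix (Fin n) (Fin n) ℂ))) *
        star (hA.isHermitian.eigenvectorUnitary : Matrix (Fin n) (Fin n) ℂ) := by
  have hres : ∀ u ∈ Set.Ioi (0 : ℝ),
      (A + u • 1)⁻¹ = hA.isHermitian.cfc fun x => (x + u)⁻¹ := fun u (hu : 0 < u) =>
    hA.isHermitian.inv_add_smul_one_eq_cfc fun x hx => by
      rw [hA.isHermitian.spectrum_real_eq_range_eigenvalues] at hx
      obtain ⟨i, rfl⟩ := hx
      have := hA.eigenvalues_pos i
      positivity
  rw [OmegaInv, mInt_congr measurableSet_Ioi fun u hu => by rw [hres u hu]]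
  exact mInt_cfc_mul_mul_cfc hA.isHermitian
    (fun i j => integrableOn_Ioi_inv_add_mul_inv_add (hA.eigenvalues_pos i) (hA.eigenvalues_pos j))
    X

end Omega

/-- For positive definite `A`, the maps `Ω_A` and `Ω_A⁻¹` are inverses of each other. -/
theorem OmegaInv_Omega {n : ℕ} (A : Matrix (Fin n) (Fin n) ℂ) (hA : A.PosDef)
    (K : Matrix (Fin n) (Fin n) ℂ) :
    OmegaInv A (Omega A K) = K := by
  have hkernel : ∀ i j, ((∫ u in Set.Ioi (0 : ℝ),
      (hA.isHermitian.eigenvalues i + u)⁻¹ * (hA.isHermitian.eigenvalues j + u)⁻¹ : ℝ) : ℂ) *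
      ((∫ p in Set.Ioc (0 : ℝ) 1,
        hA.isHermitian.eigenvalues i ^ p * hA.isHermitian.eigenvalues j ^ (1 - p) : ℝ) : ℂ) = 1 :=
    fun i j => by
      rw [← Complex.ofReal_mul, integral_Ioi_inv_add_mul_inv_add_mul_integral_rpow_mul_rpow_one_sub
        (hA.eigenvalues_pos i) (hA.eigenvalues_pos j), Complex.ofReal_one]
  have hconj : ∀ V W Y : Matrix (Fin n) (Fin n) ℂ, V * W = 1 → V * (W * Y * V) * W = Y :=
    fun V W Y h => calc
      V * (W * Y * V) * W = V * W * Y * (V * W) := by simp only [Matrix.mul_assoc]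
      _ = Y := by rw [h, Matrix.one_mul, Matrix.mul_one]
  have hU := Unitary.star_mul_self_of_mem hA.isHermitian.eigenvectorUnitary.2
  have hU' := Unitary.mul_star_self_of_mem hA.isHermitian.eigenvectorUnitary.2
  rw [OmegaInv_eq hA, Omega_eq hA, hconj _ _ _ hU, ← hadamard_assoc]
  conv_rhs => rw [← hconj _ _ K hU']
  congr 2
  ext i j
  simp only [hadamard_apply, of_apply, hkernel, one_mul]
end

section
/- For a positive definite n×n matrix A, the linear map Ω_A(K) = ∫₀¹ A^p K A^(1-p) dp is positive semidefinite with respect to the Hilbert–Schmidt inner product: Tr(K† Ω_A(K)) ≥ 0 for all n×n matrices K. -/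
open Matrix MeasureTheory
open scoped ComplexOrder

section aux

variable {n : ℕ} {A : Matrix (Fin n) (Fin n) ℂ}

lemma mpow_eq (h : A.IsHermitian) (p : ℝ) :
    mpow A p = (h.eigenvectorUnitary : Matrix (Fin n) (Fin n) ℂ) *
      Matrix.diagonal (fun i => ((h.eigenvalues i ^ p : ℝ) : ℂ)) *
      (h.eigenvectorUnitary : Matrix (Fin n) (Fin n) ℂ)ᴴ := by
  rw [mpow, dif_pos h, Matrix.IsHermitian.cfc]
  rfl

lemma mpow_continuous (hA : A.PosDef) :
    Continuous fun p : ℝ => mpow A p := by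
  have h := hA.1
  have : ∀ p : ℝ, mpow A p = (h.eigenvectorUnitary : Matrix (Fin n) (Fin n) ℂ) *
      Matrix.diagonal (fun i => ((h.eigenvalues i ^ p : ℝ) : ℂ)) *
      (h.eigenvectorUnitary : Matrix (Fin n) (Fin n) ℂ)ᴴ := mpow_eq h
  simp only [this]
  apply Continuous.matrix_mul
  apply Continuous.matrix_mul continuous_const
  · apply continuous_matrix
    intro i j
    by_cases hij : i = j
    · subst hij
      simp only [Matrix.diagonal_apply_eq]
      have hpos := hA.eigenvalues_pos i
      have : (fun p : ℝ => ((h.eigenvalues i ^ p : ℝ) : ℂ)) =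
          fun p : ℝ => ((Real.exp (Real.log (h.eigenvalues i) * p) : ℝ) : ℂ) := by
        funext p
        rw [Real.rpow_def_of_pos hpos]
      rw [this]
      fun_prop
    · simp only [Matrix.diagonal_apply_ne _ hij]
      exact continuous_const
  · exact continuous_const

end aux

/-- `Ω_A` is positive semidefinite for the Hilbert–Schmidt inner product:
`Tr (Kᴴ Ω_A(K)) ≥ 0` (a real, nonnegative number). -/
theorem Omega_posSemidef {n : ℕ} (A : Matrix (Fin n) (Fin n) ℂ) (hA : A.PosDef)
    (K : Matrix (Fin n) (Fin n) ℂ) :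
    0 ≤ ((Kᴴ * Omega A K).trace).re ∧ ((Kᴴ * Omega A K).trace).im = 0 := by
  have h := hA.1
  set U : Matrix (Fin n) (Fin n) ℂ := (h.eigenvectorUnitary : Matrix (Fin n) (Fin n) ℂ) with hU
  set M : Matrix (Fin n) (Fin n) ℂ := Uᴴ * K * U with hM
  set lam : Fin n → ℝ := h.eigenvalues with hlam
  have hUU : Uᴴ * U = 1 := by
    simpa [Matrix.star_eq_conjTranspose] using h.eigenvectorUnitary.2.1
  have hUU' : U * Uᴴ = 1 := by
    simpa [Matrix.star_eq_conjTranspose] using h.eigenvectorUnitary.2.2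
  -- real integrand
  set F : ℝ → ℝ := fun p => ∑ i, ∑ j, Complex.normSq (M j i) * (lam j ^ p * lam i ^ (1 - p))
    with hF
  -- pointwise trace formula
  have hgcont : Continuous fun p : ℝ => mpow A p * K * mpow A (1 - p) := by
    exact ((mpow_continuous hA).matrix_mul continuous_const).matrix_mul
      ((mpow_continuous hA).comp (continuous_const.sub continuous_id))
  have htrace : ∀ p : ℝ, (Kᴴ * (mpow A p * K * mpow A (1 - p))).trace = ((F p : ℝ) : ℂ) := by
    intro p
    rw [mpow_eq h p, mpow_eq h (1 - p)]
    have key : Kᴴ * (U * Matrix.diagonal (fun i => ((lam i ^ p : ℝ) : ℂ)) * Uᴴ * K *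
        (U * Matrix.diagonal (fun i => ((lam i ^ (1 - p) : ℝ) : ℂ)) * Uᴴ)) =
        (Kᴴ * U * Matrix.diagonal (fun i => ((lam i ^ p : ℝ) : ℂ)) * Uᴴ * K * U *
          Matrix.diagonal (fun i => ((lam i ^ (1 - p) : ℝ) : ℂ))) * Uᴴ := by
      simp [Matrix.mul_assoc]
    rw [key, Matrix.trace_mul_comm]
    have key2 : Uᴴ * (Kᴴ * U * Matrix.diagonal (fun i => ((lam i ^ p : ℝ) : ℂ)) * Uᴴ * K * U *
        Matrix.diagonal (fun i => ((lam i ^ (1 - p) : ℝ) : ℂ))) =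
        Mᴴ * Matrix.diagonal (fun i => ((lam i ^ p : ℝ) : ℂ)) * M *
          Matrix.diagonal (fun i => ((lam i ^ (1 - p) : ℝ) : ℂ)) := by
      rw [hM]
      simp only [Matrix.conjTranspose_mul, Matrix.conjTranspose_conjTranspose]
      simp [Matrix.mul_assoc]
    rw [key2]
    simp only [Matrix.trace, Matrix.diag_apply, Matrix.mul_diagonal, Matrix.mul_apply,
      Matrix.diagonal_apply, Matrix.conjTranspose_apply]
    simp only [mul_ite, mul_zero, ite_mul, zero_mul, Finset.sum_ite_eq, Finset.sum_ite_eq',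
      Finset.mem_univ, if_true]
    rw [hF]
    push_cast
    apply Finset.sum_congr rfl
    intro i _
    rw [Finset.sum_mul]
    apply Finset.sum_congr rfl
    intro j _
    have hc : M j i * star (M j i) = ((Complex.normSq (M j i) : ℝ) : ℂ) := by
      rw [Complex.star_def, Complex.mul_conj]
    calc star (M j i) * ((lam j ^ p : ℝ) : ℂ) * M j i * ((lam i ^ (1 - p) : ℝ) : ℂ)
        = (M j i * star (M j i)) * (((lam j ^ p : ℝ) : ℂ) * ((lam i ^ (1 - p) : ℝ) : ℂ)) := by ring
      _ = _ := by rw [hc]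
  have hint : ∀ i j : Fin n,
      IntegrableOn (fun p => (mpow A p * K * mpow A (1 - p)) i j) (Set.Ioc (0:ℝ) 1) :=
    fun i j => ((continuous_apply j).comp ((continuous_apply i).comp hgcont)).integrableOn_Ioc
  have hswap : (Kᴴ * Omega A K).trace =
      ∫ p in Set.Ioc (0:ℝ) 1, (Kᴴ * (mpow A p * K * mpow A (1 - p))).trace := by
    simp only [Matrix.trace, Matrix.diag_apply, Matrix.mul_apply, Omega, mInt, Matrix.of_apply]
    calc ∑ i, ∑ j, Kᴴ i j * ∫ p in Set.Ioc (0:ℝ) 1, (mpow A p * K * mpow A (1 - p)) j i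
        = ∑ i, ∑ j, ∫ p in Set.Ioc (0:ℝ) 1, Kᴴ i j * (mpow A p * K * mpow A (1 - p)) j i := by
          refine Finset.sum_congr rfl fun i _ => Finset.sum_congr rfl fun j _ => ?_
          rw [MeasureTheory.integral_const_mul]
      _ = ∑ i, ∫ p in Set.Ioc (0:ℝ) 1, ∑ j, Kᴴ i j * (mpow A p * K * mpow A (1 - p)) j i :=
          Finset.sum_congr rfl fun i _ =>
            (integral_finset_sum _ fun j _ => ((hint j i).const_mul _)).symm
      _ = ∫ p in Set.Ioc (0:ℝ) 1, ∑ i, ∑ j, Kᴴ i j * (mpow A p * K * mpow A (1 - p)) j i :=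
          (integral_finset_sum _ fun i _ =>
            integrable_finset_sum _ fun j _ => ((hint j i).const_mul _)).symm
  have hFnn : ∀ p : ℝ, 0 ≤ F p := by
    intro p
    refine Finset.sum_nonneg fun i _ => Finset.sum_nonneg fun j _ => ?_
    exact mul_nonneg (Complex.normSq_nonneg _)
      (mul_nonneg (Real.rpow_nonneg (hA.eigenvalues_pos j).le _)
        (Real.rpow_nonneg (hA.eigenvalues_pos i).le _))
  have hfinal : (Kᴴ * Omega A K).trace = ((∫ p in Set.Ioc (0:ℝ) 1, F p : ℝ) : ℂ) := by
    rw [hswap]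
    simp only [htrace]
    exact integral_ofReal
  rw [hfinal]
  constructor
  · rw [Complex.ofReal_re]
    exact setIntegral_nonneg measurableSet_Ioc fun p _ => hFnn p
  · rw [Complex.ofReal_im]
end

section
/- The map (X, A) ↦ X† A⁻¹ X is jointly operator convex: for A₁, A₂ positive definite, X₁, X₂ arbitrary n×n matrices, and λ ∈ [0,1], (λX₁+(1-λ)X₂)† (λA₁+(1-λ)A₂)⁻¹ (λX₁+(1-λ)X₂) ≼ λ X₁† A₁⁻¹ X₁ + (1-λ) X₂† A₂⁻¹ X₂, where ≼ is the positive semidefinite (Loewner) order. -/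
open Matrix
open scoped ComplexOrder

/-!
By the Schur complement criterion, for `A` positive definite, `Xᴴ A⁻¹ X ≼ D` holds iff the block
matrix `[A X; Xᴴ D]` is positive semidefinite. Each `[Aᵢ Xᵢ; Xᵢᴴ Xᵢᴴ Aᵢ⁻¹ Xᵢ]` is therefore
positive semidefinite, hence so is their convex combination, which is the block matrix of the
averaged `A`, `X` and `D`; the criterion read backwards gives the inequality.
-/

namespace Matrix

variable {𝕜 m n : Type*} [RCLike 𝕜]

theorem PosDef.smul_add_one_sub_smul {A₁ A₂ : Matrix m m 𝕜} (hA₁ : A₁.PosDef) (hA₂ : A₂.PosDef)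
    {l : ℝ} (hl0 : 0 ≤ l) (hl1 : l ≤ 1) : (l • A₁ + (1 - l) • A₂).PosDef := by
  rcases hl0.eq_or_lt with rfl | hl0
  · simpa using hA₂
  · exact (hA₁.smul hl0).add_posSemidef (hA₂.posSemidef.smul (sub_nonneg.2 hl1))

theorem PosDef.posSemidef_fromBlocks_conjTranspose_mul_inv_mul [Fintype m] [Fintype n]
    [DecidableEq m] {A : Matrix m m 𝕜} (hA : A.PosDef) (B : Matrix m n 𝕜) :
    (fromBlocks A B Bᴴ (Bᴴ * A⁻¹ * B)).PosSemidef := by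
  have := hA.isUnit.invertible
  rw [hA.fromBlocks₁₁, sub_self]
  exact .zero

end Matrix

/-- **Lieb–Ruskai joint operator convexity of `(X, A) ↦ Xᴴ A⁻¹ X`**:
for positive definite `A₁, A₂`, arbitrary `X₁, X₂` and `l ∈ [0,1]`,
`(lX₁+(1-l)X₂)ᴴ (lA₁+(1-l)A₂)⁻¹ (lX₁+(1-l)X₂) ≼ l X₁ᴴ A₁⁻¹ X₁ + (1-l) X₂ᴴ A₂⁻¹ X₂`
in the Loewner order (the difference is positive semidefinite). -/
theorem quadratic_form_jointly_operator_convex {n : ℕ}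
    (A₁ A₂ X₁ X₂ : Matrix (Fin n) (Fin n) ℂ)
    (hA₁ : A₁.PosDef) (hA₂ : A₂.PosDef)
    (l : ℝ) (hl0 : 0 ≤ l) (hl1 : l ≤ 1) :
    (l • (X₁ᴴ * A₁⁻¹ * X₁) + (1 - l) • (X₂ᴴ * A₂⁻¹ * X₂)
      - (l • X₁ + (1 - l) • X₂)ᴴ * (l • A₁ + (1 - l) • A₂)⁻¹
          * (l • X₁ + (1 - l) • X₂)).PosSemidef := by
  have hA := hA₁.smul_add_one_sub_smul hA₂ hl0 hl1
  have := hA.isUnit.invertible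
  rw [← hA.fromBlocks₁₁]
  have h₁ := (hA₁.posSemidef_fromBlocks_conjTranspose_mul_inv_mul X₁).smul hl0
  have h₂ := (hA₂.posSemidef_fromBlocks_conjTranspose_mul_inv_mul X₂).smul (sub_nonneg.2 hl1)
  simpa only [fromBlocks_smul, fromBlocks_add, conjTranspose_add, conjTranspose_smul,
    star_trivial] using h₁.add h₂
end

section
/- For density matrices P, Q (positive definite with trace 1), the symmetrized relative entropy satisfies H(P,Q) + H(Q,P) = ∫₀^∞ Tr[(P−Q)(Q+uI)⁻¹(P−Q)(P+uI)⁻¹] du, where H(P,Q) = Tr(P(log P − log Q)). -/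
/-! The scalar identity `log a = ∫₀^∞ ((1 + u)⁻¹ - (a + u)⁻¹) du` (for `a > 0`), applied to
the eigenvalues of a positive definite `A`, gives
`Tr (M log A) = ∫₀^∞ Tr (M ((1 + u)⁻¹ - (A + u)⁻¹)) du`; the `(1 + u)⁻¹` term only makes each
integral converge and cancels in differences. Since
`H(P,Q) + H(Q,P) = Tr ((P - Q)(log P - log Q))`, the resolvent identity
`(Q + u)⁻¹ (P - Q) (P + u)⁻¹ = (Q + u)⁻¹ - (P + u)⁻¹` turns the difference of the two
integrands into the stated one. -/

open Matrix MeasureTheory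
open scoped ComplexOrder

/-- Matrix logarithm via functional calculus (junk value `0` off the Hermitian matrices). -/
noncomputable def mlog {n : ℕ} (A : Matrix (Fin n) (Fin n) ℂ) :
    Matrix (Fin n) (Fin n) ℂ :=
  if h : A.IsHermitian then h.cfc Real.log else 0

/-- Quantum relative entropy `H(P,Q) = Tr (P (log P - log Q))`. -/
noncomputable def relEnt {n : ℕ} (P Q : Matrix (Fin n) (Fin n) ℂ) : ℂ :=
  (P * (mlog P - mlog Q)).trace

open Filter Topology Set

namespace Real

lemma hasDerivAt_log_one_add_sub_log_add {a x : ℝ} (ha : 0 < a) (hx : 0 ≤ x) :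
    HasDerivAt (fun u => log (1 + u) - log (a + u)) ((1 + x)⁻¹ - (a + x)⁻¹) x := by
  have h1 : HasDerivAt (fun u => log (1 + u)) (1 + x)⁻¹ x := by
    simpa using ((hasDerivAt_id x).const_add 1).log (by positivity)
  have h2 : HasDerivAt (fun u => log (a + u)) (a + x)⁻¹ x := by
    simpa using ((hasDerivAt_id x).const_add a).log (by positivity)
  exact h1.sub h2

lemma tendsto_log_one_add_sub_log_add {a : ℝ} (ha : 0 < a) :
    Tendsto (fun u => log (1 + u) - log (a + u)) atTop (𝓝 0) := by
  have hratio : Tendsto (fun u : ℝ => 1 + (1 - a) / (a + u)) atTop (𝓝 1) := by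
    simpa using tendsto_const_nhds.add
      ((tendsto_atTop_add_const_left _ a tendsto_id).const_div_atTop (1 - a))
  have hlog := ((continuousAt_log one_ne_zero).tendsto.comp hratio)
  rw [log_one] at hlog
  refine hlog.congr' ?_
  filter_upwards [eventually_ge_atTop 0] with u hu
  have hau : 0 < a + u := by positivity
  rw [Function.comp_apply, ← log_div (by positivity) hau.ne']
  congr 1
  field_simp
  ring

lemma integrableOn_Ioi_inv_one_add_sub_inv_add {a : ℝ} (ha : 0 < a) :
    IntegrableOn (fun u : ℝ => (1 + u)⁻¹ - (a + u)⁻¹) (Ioi 0) := by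
  have hderiv := fun x (hx : x ∈ Ici (0 : ℝ)) => hasDerivAt_log_one_add_sub_log_add ha hx
  rcases le_total a 1 with h | h
  · refine integrableOn_Ioi_deriv_of_nonpos' hderiv (fun x (hx : 0 < x) => ?_)
      (tendsto_log_one_add_sub_log_add ha)
    have := inv_anti₀ (by positivity : 0 < a + x) (by linarith : a + x ≤ 1 + x)
    linarith
  · refine integrableOn_Ioi_deriv_of_nonneg' hderiv (fun x (hx : 0 < x) => ?_)
      (tendsto_log_one_add_sub_log_add ha)
    have := inv_anti₀ (by positivity : 0 < 1 + x) (by linarith : 1 + x ≤ a + x)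
    linarith

lemma integral_Ioi_inv_one_add_sub_inv_add {a : ℝ} (ha : 0 < a) :
    ∫ u in Ioi 0, ((1 + u)⁻¹ - (a + u)⁻¹) = log a := by
  simpa using integral_Ioi_of_hasDerivAt_of_tendsto'
    (fun x hx => hasDerivAt_log_one_add_sub_log_add ha hx)
    (integrableOn_Ioi_inv_one_add_sub_inv_add ha) (tendsto_log_one_add_sub_log_add ha)

end Real

lemma integrableOn_Ioi_inv_one_add_sub_inv_add_mul {𝕜 : Type*} [RCLike 𝕜] {a : ℝ}
    (ha : 0 < a) (c : 𝕜) :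
    IntegrableOn (fun u : ℝ => (((1 + u)⁻¹ - (a + u)⁻¹ : ℝ) : 𝕜) * c) (Ioi 0) :=
  (Real.integrableOn_Ioi_inv_one_add_sub_inv_add ha).ofReal.mul_const c

namespace Matrix

variable {m 𝕜 : Type*} [Fintype m] [DecidableEq m] [RCLike 𝕜] {A : Matrix m m 𝕜}

lemma IsHermitian.trace_mul_cfc (hA : A.IsHermitian) (M : Matrix m m 𝕜) (f : ℝ → ℝ) :
    (M * cfc f A).trace = ∑ i, (f (hA.eigenvalues i) : 𝕜) *
      (star (hA.eigenvectorUnitary : Matrix m m 𝕜) * M * hA.eigenvectorUnitary) i i := by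
  rw [hA.cfc_eq, IsHermitian.cfc, Unitary.conjStarAlgAut_apply, ← mul_assoc, trace_mul_cycle,
    ← mul_assoc]
  simp [trace, mul_comm]

lemma PosDef.isUnit_add_smul_one (hA : A.PosDef) {u : ℝ} (hu : 0 ≤ u) : IsUnit (A + u • 1) :=
  (hA.add_posSemidef (PosSemidef.one.smul hu)).isUnit

lemma PosDef.cfc_inv_add_const (hA : A.PosDef) {u : ℝ} (hu : 0 ≤ u) :
    cfc (fun x => (x + u)⁻¹) A = (A + u • 1)⁻¹ := by
  have hpos : ∀ x ∈ spectrum ℝ A, 0 < x := by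
    rw [hA.1.spectrum_real_eq_range_eigenvalues]
    rintro _ ⟨i, rfl⟩
    exact hA.eigenvalues_pos i
  have hsa : IsSelfAdjoint A := hA.1
  rw [cfc_inv (fun x => x + u) A fun x hx => by linarith [hpos x hx],
    cfc_add_const u (fun x => x) A, cfc_id' ℝ A, Algebra.algebraMap_eq_smul_one,
    nonsing_inv_eq_ringInverse]

lemma PosDef.cfc_inv_one_add_sub_inv_add (hA : A.PosDef) {u : ℝ} (hu : 0 ≤ u) :
    cfc (fun x => (1 + u)⁻¹ - (x + u)⁻¹) A = (1 + u)⁻¹ • 1 - (A + u • 1)⁻¹ := by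
  have hsa : IsSelfAdjoint A := hA.1
  rw [cfc_sub _ _ _ continuousOn_const (A.finite_real_spectrum.continuousOn _), cfc_const _ A,
    hA.cfc_inv_add_const hu, Algebra.algebraMap_eq_smul_one]

lemma PosDef.trace_mul_inv_one_add_sub_inv_add (hA : A.PosDef) (M : Matrix m m 𝕜) {u : ℝ}
    (hu : 0 ≤ u) :
    (M * ((1 + u)⁻¹ • 1 - (A + u • 1)⁻¹)).trace =
      ∑ i, (((1 + u)⁻¹ - (hA.1.eigenvalues i + u)⁻¹ : ℝ) : 𝕜) *
        (star (hA.1.eigenvectorUnitary : Matrix m m 𝕜) * M * hA.1.eigenvectorUnitary) i i := by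
  rw [← hA.cfc_inv_one_add_sub_inv_add hu, hA.1.trace_mul_cfc]

lemma PosDef.integrableOn_trace_mul_inv_one_add_sub_inv_add (hA : A.PosDef)
    (M : Matrix m m 𝕜) :
    IntegrableOn (fun u : ℝ => (M * ((1 + u)⁻¹ • 1 - (A + u • 1)⁻¹)).trace) (Ioi 0) := by
  refine IntegrableOn.congr_fun ?_
    (fun u hu => (hA.trace_mul_inv_one_add_sub_inv_add M (le_of_lt hu)).symm) measurableSet_Ioi
  exact integrable_finsetSum _ fun i _ =>
    integrableOn_Ioi_inv_one_add_sub_inv_add_mul (hA.eigenvalues_pos i) _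

lemma PosDef.trace_mul_cfc_log_eq_integral (hA : A.PosDef) (M : Matrix m m 𝕜) :
    (M * cfc Real.log A).trace =
      ∫ u in Ioi (0 : ℝ), (M * ((1 + u)⁻¹ • 1 - (A + u • 1)⁻¹)).trace := by
  rw [setIntegral_congr_fun measurableSet_Ioi
      fun u hu => hA.trace_mul_inv_one_add_sub_inv_add M (le_of_lt hu),
    integral_finsetSum _ fun i _ =>
      (integrableOn_Ioi_inv_one_add_sub_inv_add_mul (hA.eigenvalues_pos i) _).integrable,
    hA.1.trace_mul_cfc]
  refine Finset.sum_congr rfl fun i _ => ?_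
  rw [integral_mul_const, integral_ofReal,
    Real.integral_Ioi_inv_one_add_sub_inv_add (hA.eigenvalues_pos i)]

end Matrix

lemma mlog_eq_cfc_log {n : ℕ} {A : Matrix (Fin n) (Fin n) ℂ} (hA : A.IsHermitian) :
    mlog A = cfc Real.log A := by
  rw [mlog, dif_pos hA, hA.cfc_eq]

lemma relEnt_add_relEnt_swap {n : ℕ} (P Q : Matrix (Fin n) (Fin n) ℂ) :
    relEnt P Q + relEnt Q P = ((P - Q) * (mlog P - mlog Q)).trace := by
  simp only [relEnt, mul_sub, sub_mul, trace_sub]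
  ring

theorem symmetrized_relEnt_integral_general {n : ℕ} (P Q : Matrix (Fin n) (Fin n) ℂ)
    (hP : P.PosDef) (hQ : Q.PosDef) :
    relEnt P Q + relEnt Q P
      = ∫ u in Set.Ioi (0 : ℝ),
          ((P - Q) * (Q + u • 1)⁻¹ * (P - Q) * (P + u • 1)⁻¹).trace := by
  rw [relEnt_add_relEnt_swap, mlog_eq_cfc_log hP.1, mlog_eq_cfc_log hQ.1, mul_sub, trace_sub,
    hP.trace_mul_cfc_log_eq_integral, hQ.trace_mul_cfc_log_eq_integral,
    ← integral_sub (hP.integrableOn_trace_mul_inv_one_add_sub_inv_add _)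
      (hQ.integrableOn_trace_mul_inv_one_add_sub_inv_add _)]
  refine setIntegral_congr_fun measurableSet_Ioi fun u (hu : 0 < u) => ?_
  have hresolvent :
      (Q + u • 1)⁻¹ * (P - Q) * (P + u • 1)⁻¹ = (Q + u • 1)⁻¹ - (P + u • 1)⁻¹ := by
    rw [nonsing_inv_eq_ringInverse, nonsing_inv_eq_ringInverse, Ring.inverse_sub_inverse
      (iff_of_true (hQ.isUnit_add_smul_one hu.le) (hP.isUnit_add_smul_one hu.le)),
      add_sub_add_right_eq_sub]
  rw [← trace_sub, ← mul_sub, sub_sub_sub_cancel_left, ← hresolvent]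
  simp only [mul_assoc]

/-- Integral representation of the symmetrized relative entropy:
`H(P,Q) + H(Q,P) = ∫₀^∞ Tr [(P−Q)(Q+uI)⁻¹(P−Q)(P+uI)⁻¹] du` for density matrices `P, Q`. -/
theorem symmetrized_relEnt_integral {n : ℕ} (P Q : Matrix (Fin n) (Fin n) ℂ)
    (hP : P.PosDef) (hQ : Q.PosDef) (hPtr : P.trace = 1) (hQtr : Q.trace = 1) :
    relEnt P Q + relEnt Q P
      = ∫ u in Set.Ioi (0 : ℝ),
          ((P - Q) * (Q + u • 1)⁻¹ * (P - Q) * (P + u • 1)⁻¹).trace :=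
  symmetrized_relEnt_integral_general P Q hP hQ
end
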